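/- arXiv:1406.4722 — 9 statements merged into one kernel-verified Lean document; each statement's English description precedes it below -/
import Mathlib

section
/- Let n ≥ 1 and work in the polynomial ring (ℤ/2)[t₁,…,tₙ]. For every k with 1 ≤ k ≤ n, the power t_k^{k+1} lies in the ideal 𝒯ₙ; equivalently, t_k^{k+1} = 0 in the quotient ring (ℤ/2)[t₁,…,tₙ]/𝒯ₙ. -/
/-! Modulo 𝒯ₙ we have t_{k+1}² = t_k t_{k+1}, hence t_{k+1}^{m+1} = t_k^m t_{k+1}; taking m = k+1,
the claim for t_{k+1} follows from the one for t_k, starting from t₁² = 0. -/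

open MvPolynomial

/-- The ideal 𝒯ₙ ⊆ (ℤ/2)[t₁,…,tₙ] generated by t₁² and t_i² + t_{i−1}·t_i for 2 ≤ i ≤ n
(zero-based indexing: generator for index `i` is `X i ^ 2` when `i = 0`, and
`X i ^ 2 + X (i-1) * X i` otherwise; note that in characteristic 2, `+` is the same as in
the paper). -/
noncomputable def Tideal (n : ℕ) : Ideal (MvPolynomial (Fin n) (ZMod 2)) :=
  Ideal.span (Set.range fun i : Fin n =>
    X i ^ 2 +
      if (i : ℕ) = 0 then 0
      else X (⟨(i : ℕ) - 1, Nat.lt_of_le_of_lt (Nat.sub_le _ _) i.isLt⟩ : Fin n) * X i)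

theorem pow_succ_eq_pow_mul_of_sq_eq_mul {M : Type*} [CommMonoid M] {a b : M}
    (h : b ^ 2 = a * b) : ∀ m : ℕ, b ^ (m + 1) = a ^ m * b
  | 0 => by simp
  | m + 1 => by
    rw [pow_succ, pow_succ_eq_pow_mul_of_sq_eq_mul h m, mul_assoc, ← sq, h, ← mul_assoc, ← pow_succ]

namespace Tideal

variable {n : ℕ}

local notation "𝐭" i => Ideal.Quotient.mk (Tideal n) (X (i : Fin n))

theorem mk_X_zero_sq (hn : 0 < n) : (𝐭 ⟨0, hn⟩) ^ 2 = 0 := by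
  rw [← map_pow, Ideal.Quotient.eq_zero_iff_mem]
  exact Ideal.subset_span ⟨⟨0, hn⟩, by simp⟩

theorem mk_X_succ_sq {k : ℕ} (hk : k + 1 < n) :
    (𝐭 ⟨k + 1, hk⟩) ^ 2 = (𝐭 ⟨k, by omega⟩) * 𝐭 ⟨k + 1, hk⟩ := by
  rw [← map_pow, ← map_mul, Ideal.Quotient.eq, CharTwo.sub_eq_add]
  exact Ideal.subset_span ⟨⟨k + 1, hk⟩, by simp⟩

theorem mk_X_pow_eq_zero : ∀ (k : ℕ) (hk : k < n), (𝐭 ⟨k, hk⟩) ^ (k + 2) = 0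
  | 0, hk => mk_X_zero_sq hk
  | k + 1, hk => by
    rw [pow_succ_eq_pow_mul_of_sq_eq_mul (mk_X_succ_sq hk), mk_X_pow_eq_zero k, zero_mul]

end Tideal

/-- For every `1 ≤ k ≤ n`, the power `t_k^{k+1}` lies in the ideal `𝒯ₙ`, i.e. it vanishes
in the quotient ring `(ℤ/2)[t₁,…,tₙ]/𝒯ₙ`. -/
theorem stmt0 (n : ℕ) (k : ℕ) (hk1 : 1 ≤ k) (hkn : k ≤ n) :
    (X (⟨k - 1, by omega⟩ : Fin n) : MvPolynomial (Fin n) (ZMod 2)) ^ (k + 1) ∈ Tideal n := by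
  obtain ⟨j, rfl⟩ : ∃ j, k = j + 1 := ⟨k - 1, by omega⟩
  rw [← Ideal.Quotient.eq_zero_iff_mem, map_pow]
  exact Tideal.mk_X_pow_eq_zero j (by omega)
end

section
/- Let n ≥ 1. Every element of the quotient ring (ℤ/2)[u₁,…,uₙ]/𝒰ₙ is the image of a polynomial all of whose monomials are square-free, i.e., the images of the square-free monomials ∏_{i∈S} u_i (over subsets S ⊆ {1,…,n}) span the quotient as a vector space over ℤ/2. -/
open MvPolynomial

/-- The ideal 𝒰ₙ ⊆ (ℤ/2)[u₁,…,uₙ] generated by u₁² and u_i² + (u₁+⋯+u_{i−1})·u_i for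
2 ≤ i ≤ n (zero-based indexing: the generator for index `i` is
`X i ^ 2 + (∑_{j < i} X j) * X i`; for `i = 0` the sum is empty). -/
noncomputable def Uideal (n : ℕ) : Ideal (MvPolynomial (Fin n) (ZMod 2)) :=
  Ideal.span (Set.range fun i : Fin n =>
    X i ^ 2 + (∑ j ∈ Finset.Iio i, X j) * X i)

/-! Modulo `𝒰ₙ` we have `uᵢ² ≡ (u₁ + ⋯ + uᵢ₋₁) uᵢ`. Hence if a square-free monomial `m`
contains `uᵢ`, then `m uᵢ ≡ (u₁ + ⋯ + uᵢ₋₁) m`, a sum of products of square-free monomials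
with variables of smaller index. By induction on `i`, every square-free monomial times `uᵢ` is
congruent to a sum of square-free monomials, so the span of the square-free monomials in the
quotient is closed under multiplication by the variables; as it contains the constants, it is
everything. Only the triangular shape of the relations matters: the argument works over any
coefficient ring and any well-ordered set of variables. -/

namespace MvPolynomial

variable {σ R : Type*} [CommRing R]

abbrev SquaresReduceBelow [Preorder σ] (I : Ideal (MvPolynomial σ R)) : Prop :=
  ∀ i, ∃ q ∈ Submodule.span R (X '' Set.Iio i), X i ^ 2 - q * X i ∈ I

noncomputable def squarefreeSpan (I : Ideal (MvPolynomial σ R)) :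
    Submodule R (MvPolynomial σ R ⧸ I) :=
  (restrictDegree σ R 1).map (Ideal.Quotient.mkₐ R I).toLinearMap

variable {I : Ideal (MvPolynomial σ R)}

theorem quotient_mk_smul (r : R) (p : MvPolynomial σ R) :
    Ideal.Quotient.mk I (r • p) = r • Ideal.Quotient.mk I p :=
  map_smul (Ideal.Quotient.mkₐ R I) r p

theorem mk_mem_squarefreeSpan {p : MvPolynomial σ R} (hp : p ∈ restrictDegree σ R 1) :
    Ideal.Quotient.mk I p ∈ squarefreeSpan I :=
  Submodule.mem_map_of_mem hp

theorem monomial_add_single_mem_restrictDegree_one {m : σ →₀ ℕ} (hm : ∀ j, m j ≤ 1)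
    {i : σ} (hmi : m i = 0) :
    monomial (m + Finsupp.single i 1) (1 : R) ∈ restrictDegree σ R 1 := by
  rw [restrictDegree, monomial_mem_restrictSupport]
  refine Or.inl fun j => ?_
  rcases eq_or_ne j i with rfl | hji
  · simp [hmi]
  · simpa [Finsupp.single_apply, hji.symm] using hm j

variable [LinearOrder σ] [WellFoundedLT σ]

theorem mk_monomial_mul_X_mem_squarefreeSpan (hI : SquaresReduceBelow I) (i : σ)
    {m : σ →₀ ℕ} (hm : ∀ j, m j ≤ 1) :
    Ideal.Quotient.mk I (monomial m 1 * X i) ∈ squarefreeSpan I := by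
  induction i using WellFoundedLT.induction generalizing m with
  | _ i ih =>
    rcases Nat.le_one_iff_eq_zero_or_eq_one.mp (hm i) with hmi | hmi
    · rw [X, monomial_mul, mul_one]
      exact mk_mem_squarefreeSpan (monomial_add_single_mem_restrictDegree_one hm hmi)
    · obtain ⟨q, hq, hqI⟩ := hI i
      have hm_eq : monomial m (1 : R) = X i * monomial (m.erase i) 1 := by
        rw [X, monomial_mul, mul_one, ← hmi, Finsupp.single_add_erase]
      have hreduce : Ideal.Quotient.mk I (monomial m 1 * X i) =
          Ideal.Quotient.mk I (q * monomial m 1) := by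
        rw [Ideal.Quotient.eq]
        convert I.mul_mem_left (monomial (m.erase i) 1) hqI using 1
        rw [hm_eq]
        ring
      rw [hreduce]
      clear hqI hreduce
      induction hq using Submodule.span_induction with
      | mem _ hx =>
        obtain ⟨j, hj, rfl⟩ := hx
        rw [mul_comm]
        exact ih j hj hm
      | zero => simp
      | add _ _ _ _ hx hy => rw [add_mul, map_add]; exact add_mem hx hy
      | smul r _ _ hx => rw [smul_mul_assoc, quotient_mk_smul]; exact Submodule.smul_mem _ r hx

theorem mk_mul_X_mem_squarefreeSpan (hI : SquaresReduceBelow I) {p : MvPolynomial σ R}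
    (hp : p ∈ restrictDegree σ R 1) (i : σ) :
    Ideal.Quotient.mk I (p * X i) ∈ squarefreeSpan I := by
  rw [restrictDegree, restrictSupport_eq_span] at hp
  induction hp using Submodule.span_induction with
  | mem _ hx =>
    obtain ⟨m, hm, rfl⟩ := hx
    exact mk_monomial_mul_X_mem_squarefreeSpan hI i hm
  | zero => simp
  | add _ _ _ _ hx hy => rw [add_mul, map_add]; exact add_mem hx hy
  | smul r _ _ hx => rw [smul_mul_assoc, quotient_mk_smul]; exact Submodule.smul_mem _ r hx

theorem squarefreeSpan_eq_top (hI : SquaresReduceBelow I) : squarefreeSpan I = ⊤ := by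
  refine Submodule.eq_top_iff'.mpr fun x => ?_
  obtain ⟨p, rfl⟩ := Ideal.Quotient.mk_surjective x
  induction p using MvPolynomial.induction_on with
  | C a =>
    refine mk_mem_squarefreeSpan ?_
    rw [C_apply, restrictDegree, monomial_mem_restrictSupport]
    simp
  | add p q hp hq => rw [map_add]; exact add_mem hp hq
  | mul_X p i hp =>
    obtain ⟨p', hp', hp'p⟩ := hp
    rw [map_mul, ← hp'p]
    exact mk_mul_X_mem_squarefreeSpan hI hp' i

end MvPolynomial

theorem squaresReduceBelow_Uideal (n : ℕ) : SquaresReduceBelow (Uideal n) := fun i =>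
  ⟨∑ j ∈ Finset.Iio i, X j,
    Submodule.sum_mem _ fun j hj => Submodule.subset_span ⟨j, Finset.mem_Iio.mp hj, rfl⟩,
    by rw [CharTwo.sub_eq_add]; exact Ideal.subset_span ⟨i, rfl⟩⟩

theorem stmt2_general (n : ℕ)
    (x : MvPolynomial (Fin n) (ZMod 2) ⧸ Uideal n) :
    ∃ P : MvPolynomial (Fin n) (ZMod 2),
      (∀ m ∈ P.support, ∀ j, m j ≤ 1) ∧ Ideal.Quotient.mk (Uideal n) P = x := by
  obtain ⟨P, hP, hPx⟩ := (squarefreeSpan_eq_top (squaresReduceBelow_Uideal n)).ge Submodule.mem_top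
  exact ⟨P, (mem_restrictDegree _ P 1).mp hP, hPx⟩

/-- Every element of `(ℤ/2)[u₁,…,uₙ]/𝒰ₙ` is the image of a polynomial all of whose
monomials are square-free (each variable occurs with exponent at most 1); i.e. the
square-free monomials span the quotient over ℤ/2. -/
theorem stmt2 (n : ℕ) (hn : 1 ≤ n)
    (x : MvPolynomial (Fin n) (ZMod 2) ⧸ Uideal n) :
    ∃ P : MvPolynomial (Fin n) (ZMod 2),
      (∀ m ∈ P.support, ∀ j, m j ≤ 1) ∧ Ideal.Quotient.mk (Uideal n) P = x :=
  stmt2_general n x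
end

section
/- Let n ≥ 1. The monomial u₁u₂⋯uₙ does not lie in the ideal 𝒰ₙ; equivalently, its image in the quotient ring (ℤ/2)[u₁,…,uₙ]/𝒰ₙ is nonzero. -/
/-!
Splitting off the last variable maps `(ℤ/2)[u₁,…,uₙ₊₁]` to `A[t]` with `A = (ℤ/2)[u₁,…,uₙ]`,
sending `𝒰ₙ₊₁` into the ideal generated by `𝒰ₙ` and `t² + (u₁+⋯+uₙ)t`, and `u₁⋯uₙ₊₁` to
`(u₁⋯uₙ)·t`. Modulo `𝒰ₙ` the polynomial `t² + (u₁+⋯+uₙ)t` stays monic of degree 2, so it cannot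
divide a nonzero multiple of `t`; hence `u₁⋯uₙ ∉ 𝒰ₙ` propagates from `n` to `n + 1`.
-/

open MvPolynomial

namespace Polynomial

variable {R : Type*} [CommRing R]

theorem C_mul_X_notMem_map_C_sup_span {I : Ideal R} {f : R} (hf : f ∉ I) {p : R[X]}
    (hp : p.Monic) (hdeg : 1 < p.natDegree) :
    C f * X ∉ I.map C ⊔ Ideal.span {p} := by
  intro hmem
  have : Nontrivial (R ⧸ I) :=
    Ideal.Quotient.nontrivial_iff.mpr fun h => hf (h ▸ Submodule.mem_top)
  set π := mapRingHom (Ideal.Quotient.mk I)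
  have hker : (I.map C).map π = ⊥ := by
    rw [Ideal.map_eq_bot_iff_le_ker, ker_mapRingHom, Ideal.mk_ker]
  have hdvd : π p ∣ π (C f * X) := by
    rw [← Ideal.mem_span_singleton, ← Set.image_singleton, ← Ideal.map_span]
    simpa [Ideal.map_sup, hker] using Ideal.mem_map_of_mem π hmem
  have hf' : Ideal.Quotient.mk I f ≠ 0 := by rwa [Ne, Ideal.Quotient.eq_zero_iff_mem]
  refine (hp.map _).not_dvd_of_natDegree_lt ?_ ?_ hdvd
  · simpa [π] using hf'
  · simpa [π, natDegree_C_mul_X _ hf', hp.natDegree_map] using hdeg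

theorem monic_X_sq_add_C_mul_X (a : R) : (X ^ 2 + C a * X).Monic :=
  monic_X_pow_add ((degree_C_mul_X_le a).trans_lt (by norm_num))

theorem natDegree_X_sq_add_C_mul_X [Nontrivial R] (a : R) :
    (X ^ 2 + C a * X).natDegree = 2 := by
  have hlt : (C a * X).degree < (X ^ 2 : R[X]).degree := by
    rw [degree_X_pow]
    exact (degree_C_mul_X_le a).trans_lt (by norm_num)
  rw [natDegree_add_eq_left_of_degree_lt hlt, natDegree_X_pow]

end Polynomial

namespace MvPolynomial

variable (R : Type*) [CommRing R] (n : ℕ)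

noncomputable def splitLast :
    MvPolynomial (Fin (n + 1)) R →ₐ[R] Polynomial (MvPolynomial (Fin n) R) :=
  aeval (Fin.snoc (fun j => Polynomial.C (X j)) Polynomial.X)

variable {R n}

@[simp]
theorem splitLast_X_castSucc (j : Fin n) :
    splitLast R n (X j.castSucc) = Polynomial.C (X j) := by
  simp [splitLast]

@[simp]
theorem splitLast_X_last : splitLast R n (X (Fin.last n)) = Polynomial.X := by
  simp [splitLast]

theorem splitLast_prod_X :
    splitLast R n (∏ i, X i) = Polynomial.C (∏ j, X j) * Polynomial.X := by
  simp [Fin.prod_univ_castSucc]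

end MvPolynomial

theorem map_splitLast_Uideal_le (n : ℕ) :
    (Uideal (n + 1)).map (splitLast (ZMod 2) n) ≤
      (Uideal n).map Polynomial.C ⊔
        Ideal.span {Polynomial.X ^ 2 + Polynomial.C (∑ j, X j) * Polynomial.X} := by
  rw [Uideal, Ideal.map_span, Ideal.span_le]
  rintro _ ⟨_, ⟨i, rfl⟩, rfl⟩
  induction i using Fin.lastCases with
  | last =>
    apply Ideal.mem_sup_right
    apply Ideal.subset_span
    simp [Fin.Iio_last_eq_map]
  | cast j =>
    apply Ideal.mem_sup_left
    have hgen : splitLast (ZMod 2) n (X j.castSucc ^ 2 + (∑ k ∈ Finset.Iio j.castSucc, X k) *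
        X j.castSucc) = Polynomial.C (X j ^ 2 + (∑ k ∈ Finset.Iio j, X k) * X j) := by
      simp [← Fin.map_castSuccEmb_Iio, Finset.sum_map]
    exact hgen ▸ Ideal.mem_map_of_mem _ (Ideal.subset_span (Set.mem_range_self j))

theorem stmt4_general (n : ℕ) :
    (∏ i : Fin n, X i : MvPolynomial (Fin n) (ZMod 2)) ∉ Uideal n := by
  induction n with
  | zero => simp [Uideal]
  | succ n ih =>
    intro hmem
    refine Polynomial.C_mul_X_notMem_map_C_sup_span ih (Polynomial.monic_X_sq_add_C_mul_X _)
      (by rw [Polynomial.natDegree_X_sq_add_C_mul_X]; norm_num) (map_splitLast_Uideal_le n ?_)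
    rw [← splitLast_prod_X]
    exact Ideal.mem_map_of_mem _ hmem

/-- The monomial `u₁u₂⋯uₙ` does not lie in the ideal `𝒰ₙ`; equivalently, its image in the
quotient ring `(ℤ/2)[u₁,…,uₙ]/𝒰ₙ` is nonzero. -/
theorem stmt4 (n : ℕ) (hn : 1 ≤ n) :
    (∏ i : Fin n, X i : MvPolynomial (Fin n) (ZMod 2)) ∉ Uideal n :=
  stmt4_general n
end

section
/- Let n ≥ 1. The ℤ/2-algebra endomorphism φ of (ℤ/2)[x₁,…,xₙ] determined by φ(x_i) = x₁ + x₂ + ⋯ + x_i maps the ideal 𝒯ₙ into the ideal 𝒰ₙ (where both ideals are taken in (ℤ/2)[x₁,…,xₙ], with t_i and u_i both interpreted as x_i), and φ induces an isomorphism of rings (ℤ/2)[x₁,…,xₙ]/𝒯ₙ ≅ (ℤ/2)[x₁,…,xₙ]/𝒰ₙ. -/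
/-!
Let `φ` send `xᵢ` to the partial sum `sᵢ = x₁ + ⋯ + xᵢ`. It is an automorphism of the polynomial
ring, inverse to `xᵢ ↦ xᵢ - xᵢ₋₁`. Writing `sᵢ = sᵢ₋₁ + xᵢ`, in characteristic two
`φ(xᵢ² + xᵢ₋₁xᵢ) = (sᵢ₋₁ + xᵢ)² + sᵢ₋₁(sᵢ₋₁ + xᵢ) = xᵢ² + sᵢ₋₁xᵢ`,
so `φ` carries the generators of `𝒯ₙ` exactly onto those of `𝒰ₙ`, hence `φ(𝒯ₙ) = 𝒰ₙ`.
-/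

open MvPolynomial

open Finset

theorem CharTwo.add_sq_add_mul_add {R : Type*} [CommRing R] [CharP R 2] (a b : R) :
    (a + b) ^ 2 + a * (a + b) = b ^ 2 + a * b := by
  linear_combination (a ^ 2 + a * b) * CharTwo.two_eq_zero (R := R)

theorem Fin.Iio_mk_zero {n : ℕ} (h : 0 < n) : Iio (⟨0, h⟩ : Fin n) = ∅ := by
  ext j
  simp [Fin.lt_def]

theorem Fin.Iio_mk_succ {n k : ℕ} (h : k + 1 < n) :
    Iio (⟨k + 1, h⟩ : Fin n) = Iic ⟨k, Nat.lt_of_succ_lt h⟩ := by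
  ext j
  simp only [mem_Iio, mem_Iic, Fin.lt_def, Fin.le_def]
  omega

namespace PartialSums

section CommSemiring

variable (R : Type*) [CommSemiring R] {n : ℕ}

noncomputable def predX : Fin n → MvPolynomial (Fin n) R
  | ⟨0, _⟩ => 0
  | ⟨k + 1, h⟩ => X ⟨k, Nat.lt_of_succ_lt h⟩

noncomputable def partialSums (n : ℕ) : MvPolynomial (Fin n) R →ₐ[R] MvPolynomial (Fin n) R :=
  aeval fun i => ∑ j ∈ Iic i, X j

variable {R}

theorem partialSums_predX (i : Fin n) :
    partialSums R n (predX R i) = ∑ j ∈ Iio i, X j := by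
  obtain ⟨_ | k, h⟩ := i
  · simp [predX, Fin.Iio_mk_zero]
  · simp [predX, partialSums, Fin.Iio_mk_succ]

theorem partialSums_X (i : Fin n) :
    partialSums R n (X i) = partialSums R n (predX R i) + X i := by
  rw [partialSums_predX, partialSums, aeval_X, ← Iio_insert, sum_insert notMem_Iio_self,
    add_comm]

theorem tGenerator_eq_predX (i : Fin n) :
    (X i ^ 2 + if (i : ℕ) = 0 then 0
        else X (⟨(i : ℕ) - 1, Nat.lt_of_le_of_lt (Nat.sub_le _ _) i.isLt⟩ : Fin n) * X i :
      MvPolynomial (Fin n) R) =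
    X i ^ 2 + predX R i * X i := by
  obtain ⟨_ | k, h⟩ := i <;> simp [predX]

end CommSemiring

variable {R : Type*} [CommRing R] {n : ℕ}

variable (R n) in
noncomputable def differences : MvPolynomial (Fin n) R →ₐ[R] MvPolynomial (Fin n) R :=
  aeval fun i => X i - predX R i

theorem partialSums_differences_X (i : Fin n) :
    partialSums R n (differences R n (X i)) = X i := by
  rw [differences, aeval_X, map_sub, partialSums_X, add_sub_cancel_left]

theorem differences_partialSums_X (k : ℕ) (h : k < n) :
    differences R n (partialSums R n (X ⟨k, h⟩)) = X ⟨k, h⟩ := by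
  induction k with
  | zero => simp [partialSums_X, predX, differences]
  | succ k ih =>
    rw [partialSums_X, predX, map_add, ih, differences, aeval_X, predX, add_sub_cancel]

variable (R n) in
noncomputable def partialSumsEquiv : MvPolynomial (Fin n) R ≃ₐ[R] MvPolynomial (Fin n) R :=
  AlgEquiv.ofAlgHom (partialSums R n) (differences R n)
    (algHom_ext partialSums_differences_X)
    (algHom_ext fun ⟨k, h⟩ => differences_partialSums_X k h)

theorem partialSums_tGenerator [CharP R 2] (i : Fin n) :
    partialSums R n (X i ^ 2 + predX R i * X i) = X i ^ 2 + (∑ j ∈ Iio i, X j) * X i := by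
  rw [map_add, map_mul, map_pow, partialSums_X, ← partialSums_predX,
    CharTwo.add_sq_add_mul_add]

theorem map_Tideal : Ideal.map (partialSumsEquiv (ZMod 2) n) (Tideal n) = Uideal n := by
  rw [Tideal, Uideal, Ideal.map_span, ← Set.range_comp]
  congr 2
  ext1 i
  exact (congrArg _ (tGenerator_eq_predX i)).trans (partialSums_tGenerator i)

end PartialSums

theorem stmt6_general (n : ℕ) :
    (∀ p ∈ Tideal n,
      (aeval fun i : Fin n => (∑ j ∈ Finset.Iic i, X j : MvPolynomial (Fin n) (ZMod 2))) p
        ∈ Uideal n) ∧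
    ∃ e : (MvPolynomial (Fin n) (ZMod 2) ⧸ Tideal n) ≃+*
        (MvPolynomial (Fin n) (ZMod 2) ⧸ Uideal n),
      ∀ p : MvPolynomial (Fin n) (ZMod 2),
        e (Ideal.Quotient.mk (Tideal n) p) =
          Ideal.Quotient.mk (Uideal n)
            ((aeval fun i : Fin n =>
              (∑ j ∈ Finset.Iic i, X j : MvPolynomial (Fin n) (ZMod 2))) p) :=
  ⟨fun _ hp => PartialSums.map_Tideal ▸ Ideal.mem_map_of_mem _ hp,
    Ideal.quotientEquiv _ _ (PartialSums.partialSumsEquiv (ZMod 2) n)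
      PartialSums.map_Tideal.symm,
    Ideal.quotientEquiv_mk _ _ _ _⟩

/-- The ℤ/2-algebra endomorphism `φ` of `(ℤ/2)[x₁,…,xₙ]` determined by
`φ(x_i) = x₁ + ⋯ + x_i` maps `𝒯ₙ` into `𝒰ₙ` and induces a ring isomorphism
`(ℤ/2)[x₁,…,xₙ]/𝒯ₙ ≅ (ℤ/2)[x₁,…,xₙ]/𝒰ₙ`. -/
theorem stmt6 (n : ℕ) (hn : 1 ≤ n) :
    (∀ p ∈ Tideal n,
      (aeval fun i : Fin n => (∑ j ∈ Finset.Iic i, X j : MvPolynomial (Fin n) (ZMod 2))) p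
        ∈ Uideal n) ∧
    ∃ e : (MvPolynomial (Fin n) (ZMod 2) ⧸ Tideal n) ≃+*
        (MvPolynomial (Fin n) (ZMod 2) ⧸ Uideal n),
      ∀ p : MvPolynomial (Fin n) (ZMod 2),
        e (Ideal.Quotient.mk (Tideal n) p) =
          Ideal.Quotient.mk (Uideal n)
            ((aeval fun i : Fin n =>
              (∑ j ∈ Finset.Iic i, X j : MvPolynomial (Fin n) (ZMod 2))) p) :=
  stmt6_general n
end

section
/- Let n ≥ 1. The monomial t₁t₂⋯tₙ does not lie in the ideal 𝒯ₙ; equivalently, its image in the quotient ring (ℤ/2)[t₁,…,tₙ]/𝒯ₙ is nonzero. -/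
/-!
Consider the `ℤ/2`-linear functional on `(ℤ/2)[t₁,…,tₙ]` that sums the coefficients of the
monomials `t^d` whose exponent partial sums satisfy `d₁ + ⋯ + d_k ≤ k` for every `k`. It takes the value
`1` on `t₁⋯tₙ` but vanishes on `𝒯ₙ`: no multiple `t^d·t₁²` satisfies the bound, and `t^d·t_i²`,
`t^d·t_{i-1}t_i` satisfy it together, so on `t^d·(t_i² + t_{i-1}t_i)` the two contributions cancel
mod 2.
-/

open MvPolynomial

open Finset

theorem Module.Basis.map_eq_zero_of_mem_ideal_span {ι R A M : Type*} [CommSemiring R]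
    [CommSemiring A] [Algebra R A] [AddCommMonoid M] [Module R M] (b : Module.Basis ι R A)
    (φ : A →ₗ[R] M) {s : Set A} (h : ∀ i, ∀ g ∈ s, φ (b i * g) = 0) {p : A}
    (hp : p ∈ Ideal.span s) : φ p = 0 := by
  suffices ∀ q, φ (q * p) = 0 by simpa using this 1
  induction hp using Submodule.span_induction with
  | mem g hg =>
    intro q
    have : φ ∘ₗ LinearMap.mulRight R g = 0 := b.ext fun i => by simpa using h i g hg
    exact LinearMap.congr_fun this q
  | zero => simp
  | add p p' _ _ hp hp' => simp [mul_add, hp, hp']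
  | smul a p _ hp => intro q; simpa [mul_left_comm, mul_assoc] using hp (q * a)

variable {n : ℕ}

def partialSum (d : Fin n →₀ ℕ) (k : Fin n) : ℕ :=
  ∑ i ∈ Iic k, d i

lemma partialSum_add_single (d : Fin n →₀ ℕ) (i k : Fin n) (c : ℕ) :
    partialSum (d + Finsupp.single i c) k = partialSum d k + if i ≤ k then c else 0 := by
  simp [partialSum, sum_add_distrib, Finsupp.single_apply]

lemma partialSum_mono (d : Fin n →₀ ℕ) : Monotone (partialSum d) :=
  fun _ _ hkl => sum_le_sum_of_subset (Iic_subset_Iic.mpr hkl)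

/-- Zero-based form of the bound `d₁ + ⋯ + d_k ≤ k`. -/
def Admissible (d : Fin n →₀ ℕ) : Prop :=
  ∀ k, partialSum d k ≤ k + 1

lemma not_admissible_add_single_two (d : Fin n →₀ ℕ) {i : Fin n} (hi : (i : ℕ) = 0) :
    ¬ Admissible (d + Finsupp.single i 2) := fun h => by
  have := h i
  rw [partialSum_add_single, if_pos le_rfl] at this
  omega

lemma admissible_add_single_two_iff (d : Fin n →₀ ℕ) {i j : Fin n} (hji : (j : ℕ) + 1 = i) :
    Admissible (d + Finsupp.single i 2) ↔
      Admissible (d + Finsupp.single j 1 + Finsupp.single i 1) := by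
  simp only [Admissible, partialSum_add_single]
  refine ⟨fun h k => ?_, fun h k => ?_⟩
  · have hmono := partialSum_mono d (show j ≤ i from Fin.le_def.mpr (by omega))
    have hi := h i
    have hk := h k
    by_cases hkj : k = j
    · subst hkj
      have hik : ¬ i ≤ k := Fin.not_le.mpr (Fin.lt_def.mpr (by omega))
      simp only [le_refl, ite_true, hik, ite_false] at hi ⊢
      omega
    · have hkj : (k : ℕ) ≠ j := Fin.val_ne_of_ne hkj
      split_ifs at * <;> omega
  · have := h k
    split_ifs at * <;> omega

open Classical in
noncomputable def admissibleCoeffSum (n : ℕ) : MvPolynomial (Fin n) (ZMod 2) →ₗ[ZMod 2] ZMod 2 :=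
  (basisMonomials (Fin n) (ZMod 2)).constr (ZMod 2) fun d => if Admissible d then 1 else 0

open Classical in
lemma admissibleCoeffSum_monomial (d : Fin n →₀ ℕ) :
    admissibleCoeffSum n (monomial d 1) = if Admissible d then 1 else 0 := by
  simpa [admissibleCoeffSum] using (basisMonomials (Fin n) (ZMod 2)).constr_basis (ZMod 2) _ d

lemma admissibleCoeffSum_prod_X : admissibleCoeffSum n (∏ i, X i) = 1 := by
  have hprod : (∏ i : Fin n, X i : MvPolynomial (Fin n) (ZMod 2)) =
      monomial (∑ i, Finsupp.single i 1) 1 := by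
    simp [monomial_sum_one, X]
  have hones : ∀ x, (∑ i : Fin n, Finsupp.single i 1) x = 1 := by
    simp [Finsupp.finsetSum_apply, Finsupp.single_apply]
  rw [hprod, admissibleCoeffSum_monomial, if_pos]
  intro k
  simp [partialSum, hones]

lemma admissibleCoeffSum_eq_zero_of_mem_Tideal {p : MvPolynomial (Fin n) (ZMod 2)}
    (hp : p ∈ Tideal n) : admissibleCoeffSum n p = 0 := by
  refine (basisMonomials (Fin n) (ZMod 2)).map_eq_zero_of_mem_ideal_span _ ?_ hp
  rintro d _ ⟨i, rfl⟩
  simp only [coe_basisMonomials, mul_add, X_pow_eq_monomial, monomial_mul, mul_one]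
  split_ifs with hi
  · rw [mul_zero, add_zero, admissibleCoeffSum_monomial,
      if_neg (not_admissible_add_single_two d hi)]
  · set j : Fin n := ⟨(i : ℕ) - 1, _⟩
    have hXX : (X j * X i : MvPolynomial (Fin n) (ZMod 2)) =
        monomial (Finsupp.single j 1 + Finsupp.single i 1) 1 := by
      simp [X, monomial_mul]
    have hji : (j : ℕ) + 1 = i := by simp only [j]; omega
    rw [hXX, monomial_mul, mul_one, ← add_assoc, map_add, admissibleCoeffSum_monomial,
      admissibleCoeffSum_monomial, admissible_add_single_two_iff d hji]
    exact CharTwo.add_self_eq_zero _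

theorem stmt7_general (n : ℕ) :
    (∏ i : Fin n, X i : MvPolynomial (Fin n) (ZMod 2)) ∉ Tideal n := fun hmem =>
  one_ne_zero <| admissibleCoeffSum_prod_X.symm.trans
    (admissibleCoeffSum_eq_zero_of_mem_Tideal hmem)

/-- The monomial `t₁t₂⋯tₙ` does not lie in the ideal `𝒯ₙ`; equivalently, its image in the
quotient ring `(ℤ/2)[t₁,…,tₙ]/𝒯ₙ` is nonzero. -/
theorem stmt7 (n : ℕ) (hn : 1 ≤ n) :
    (∏ i : Fin n, X i : MvPolynomial (Fin n) (ZMod 2)) ∉ Tideal n :=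
  stmt7_general n
end

section
/- Let n ≥ 1. The images in the quotient ring (ℤ/2)[t₁,…,tₙ]/𝒯ₙ of the 2ⁿ square-free monomials ∏_{i∈S} t_i, where S ranges over all subsets of {1,…,n}, form a basis of this quotient as a vector space over ℤ/2. -/
open MvPolynomial

/-!
Spanning: in the quotient `t₁² = 0` and `t_i² = t_{i-1} t_i`, so multiplying a square-free
monomial by `t_i` gives a square-free monomial, zero, or (by induction on `i`) an element of their
span.

Independence: read a monomial `t^a` as `a_k` stones on position `k`. The relation
`t_k² ↦ t_{k-1} t_k` moves a surplus stone one step to the left, and a surplus on `t₁` kills the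
monomial. Sweeping from right to left, each position keeps at most one stone and passes the rest
on; the outcome (zero if stones leave the left end, otherwise the square-free monomial of the
occupied positions) is invariant under the relations, so it defines a linear map on the quotient
sending distinct square-free monomials to distinct basis vectors.
-/

namespace MvPolynomial

variable {σ R : Type*} [CommSemiring R]

theorem linearMap_eq_zero_of_mem_span_range {M ι : Type*} [AddCommMonoid M] [Module R M]
    [Fintype ι] (L : MvPolynomial σ R →ₗ[R] M) (g : ι → MvPolynomial σ R)
    (hL : ∀ u i, L (monomial u 1 * g i) = 0) {p : MvPolynomial σ R}
    (hp : p ∈ Ideal.span (Set.range g)) : L p = 0 := by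
  obtain ⟨c, rfl⟩ := Ideal.mem_span_range_iff_exists_fun.1 hp
  refine map_sum L _ _ ▸ Finset.sum_eq_zero fun i _ => ?_
  induction c i using MvPolynomial.induction_on' with
  | monomial u a =>
    rw [show monomial u a = a • monomial u 1 by rw [smul_monomial, smul_eq_mul, mul_one],
      smul_mul_assoc, map_smul, hL, smul_zero]
  | add p q hp hq => rw [add_mul, map_add, hp, hq, add_zero]

theorem span_eq_top_of_mul_X_mem {A : Type*} [Semiring A] [Algebra R A]
    {φ : MvPolynomial σ R →ₐ[R] A} (hφ : Function.Surjective φ) {s : Set A}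
    (h1 : 1 ∈ Submodule.span R s) (hX : ∀ x ∈ s, ∀ i, x * φ (X i) ∈ Submodule.span R s) :
    Submodule.span R s = ⊤ := by
  have hmul : ∀ y ∈ Submodule.span R s, ∀ i, y * φ (X i) ∈ Submodule.span R s := by
    intro y hy i
    induction hy using Submodule.span_induction with
    | mem x hx => exact hX x hx i
    | zero => simp
    | add x y _ _ hx hy => rw [add_mul]; exact add_mem hx hy
    | smul r x _ hx => rw [smul_mul_assoc]; exact Submodule.smul_mem _ r hx
  refine Submodule.eq_top_iff'.2 fun a => ?_
  obtain ⟨p, rfl⟩ := hφ a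
  induction p using MvPolynomial.induction_on with
  | C r =>
    rw [← algebraMap_eq, AlgHom.commutes, Algebra.algebraMap_eq_smul_one]
    exact Submodule.smul_mem _ r h1
  | add p q hp hq => rw [map_add]; exact add_mem hp hq
  | mul_X p i hp => rw [map_mul]; exact hmul _ hp i

end MvPolynomial

namespace Tideal

/-- `s.1` is the surplus carried in from the right, `s.2` the reduced exponents to the right. -/
def reduceStep (a : ℕ) (s : ℕ × List ℕ) : ℕ × List ℕ :=
  (a + s.1 - 1, min (a + s.1) 1 :: s.2)

def reduce (l : List ℕ) : ℕ × List ℕ :=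
  l.foldr reduceStep (0, [])

theorem reduceStep_reduceStep (x y : ℕ) (s : ℕ × List ℕ) :
    reduceStep x (reduceStep (y + 2) s) = reduceStep (x + 1) (reduceStep (y + 1) s) := by
  simp only [reduceStep, Prod.mk.injEq, List.cons.injEq, and_true]
  omega

theorem reduce_modify_add_two {l : List ℕ} {i : ℕ} (hi : i + 1 < l.length) :
    reduce (l.modify (i + 1) (· + 2)) = reduce ((l.modify i (· + 1)).modify (i + 1) (· + 1)) := by
  induction l generalizing i with
  | nil => simp at hi
  | cons a l ih =>
    cases i with
    | zero =>
      obtain ⟨b, l, rfl⟩ := List.exists_cons_of_length_pos (by simpa using hi : 0 < l.length)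
      simp only [reduce, List.modify_succ_cons, List.modify_zero_cons, List.foldr_cons,
        reduceStep_reduceStep]
    | succ i =>
      have := ih (by simpa using hi)
      simp only [reduce, List.modify_succ_cons, List.foldr_cons] at this ⊢
      rw [this]

theorem reduce_modify_zero_add_two_fst_ne_zero {l : List ℕ} (hl : l ≠ []) :
    (reduce (l.modify 0 (· + 2))).1 ≠ 0 := by
  obtain ⟨a, l, rfl⟩ := List.exists_cons_of_ne_nil hl
  simp only [reduce, List.modify_zero_cons, List.foldr_cons, reduceStep]
  omega

theorem reduce_of_le_one {l : List ℕ} (hl : ∀ a ∈ l, a ≤ 1) : reduce l = (0, l) := by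
  induction l with
  | nil => rfl
  | cons a l ih =>
    simp only [List.mem_cons, forall_eq_or_imp] at hl
    simp only [reduce, List.foldr_cons] at ih ⊢
    simp only [ih hl.2, reduceStep, Prod.mk.injEq, List.cons.injEq, and_true]
    omega

noncomputable def normalForm (l : List ℕ) : List ℕ →₀ ZMod 2 :=
  if (reduce l).1 = 0 then Finsupp.single (reduce l).2 1 else 0

theorem ofFn_add_single {n : ℕ} (e : Fin n →₀ ℕ) (i : Fin n) (c : ℕ) :
    List.ofFn ⇑(e + Finsupp.single i c) = (List.ofFn ⇑e).modify i (· + c) := by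
  refine List.ext_getElem (by simp) fun k h₁ h₂ => ?_
  simp only [List.getElem_ofFn, List.getElem_modify, Finsupp.coe_add, Pi.add_apply,
    Finsupp.single_apply, Fin.ext_iff]
  split_ifs <;> simp

variable {n : ℕ}

noncomputable def gen (n : ℕ) (i : Fin n) : MvPolynomial (Fin n) (ZMod 2) :=
  X i ^ 2 +
    if (i : ℕ) = 0 then 0
    else X (⟨(i : ℕ) - 1, Nat.lt_of_le_of_lt (Nat.sub_le _ _) i.isLt⟩ : Fin n) * X i

theorem eq_span_range_gen (n : ℕ) : Tideal n = Ideal.span (Set.range (gen n)) := rfl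

theorem mk_X_sq_of_val_eq_zero {i : Fin n} (hi : (i : ℕ) = 0) :
    Ideal.Quotient.mk (Tideal n) (X i ^ 2) = 0 := by
  rw [Ideal.Quotient.eq_zero_iff_mem, eq_span_range_gen]
  simpa [gen, hi] using Ideal.subset_span (Set.mem_range_self (f := gen n) i)

theorem mk_X_sq_of_val_eq_succ {i j : Fin n} (hij : (i : ℕ) = j + 1) :
    Ideal.Quotient.mk (Tideal n) (X i ^ 2) = Ideal.Quotient.mk (Tideal n) (X j * X i) := by
  have hj : (⟨(i : ℕ) - 1, Nat.lt_of_le_of_lt (Nat.sub_le _ _) i.isLt⟩ : Fin n) = j := by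
    ext; simp only; omega
  rw [Ideal.Quotient.eq, CharTwo.sub_eq_add, eq_span_range_gen]
  simpa [gen, hij, hj] using Ideal.subset_span (Set.mem_range_self (f := gen n) i)

noncomputable def sqFreeClass (n : ℕ) (S : Finset (Fin n)) :
    MvPolynomial (Fin n) (ZMod 2) ⧸ Tideal n :=
  Ideal.Quotient.mk (Tideal n) (∏ j ∈ S, X j)

theorem sqFreeClass_mul_mk_X_mem_span (S : Finset (Fin n)) (i : Fin n) :
    sqFreeClass n S * Ideal.Quotient.mk (Tideal n) (X i) ∈
      Submodule.span (ZMod 2) (Set.range (sqFreeClass n)) := by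
  have of_notMem {i : Fin n} (hi : i ∉ S) :
      sqFreeClass n S * Ideal.Quotient.mk (Tideal n) (X i) ∈
        Submodule.span (ZMod 2) (Set.range (sqFreeClass n)) :=
    Submodule.subset_span
      ⟨insert i S, by simp only [sqFreeClass, Finset.prod_insert hi, map_mul, mul_comm]⟩
  have of_mem {i : Fin n} (hi : i ∈ S) :
      sqFreeClass n S * Ideal.Quotient.mk (Tideal n) (X i) =
        Ideal.Quotient.mk (Tideal n) (∏ j ∈ S.erase i, X j) *
          Ideal.Quotient.mk (Tideal n) (X i ^ 2) := by
    simp only [sqFreeClass, ← map_mul, ← Finset.mul_prod_erase S X hi]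
    ring_nf
  obtain ⟨k, hk⟩ := i
  induction k with
  | zero =>
    by_cases hi : ⟨0, hk⟩ ∈ S
    · rw [of_mem hi, mk_X_sq_of_val_eq_zero rfl, mul_zero]
      exact zero_mem _
    · exact of_notMem hi
  | succ k ih =>
    by_cases hi : ⟨k + 1, hk⟩ ∈ S
    · rw [of_mem hi, mk_X_sq_of_val_eq_succ (j := ⟨k, by omega⟩) rfl]
      convert ih (by omega) using 1
      simp only [sqFreeClass, ← map_mul, ← Finset.mul_prod_erase S X hi]
      ring_nf
    · exact of_notMem hi

theorem span_range_sqFreeClass (n : ℕ) :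
    Submodule.span (ZMod 2) (Set.range (sqFreeClass n)) = ⊤ := by
  refine span_eq_top_of_mul_X_mem (φ := Ideal.Quotient.mkₐ (ZMod 2) (Tideal n))
    (Ideal.Quotient.mkₐ_surjective _ _) (Submodule.subset_span ⟨∅, ?_⟩) ?_
  · simp [sqFreeClass]
  · rintro _ ⟨S, rfl⟩ i
    exact sqFreeClass_mul_mk_X_mem_span S i

noncomputable def normalFormMap (n : ℕ) :
    MvPolynomial (Fin n) (ZMod 2) →ₗ[ZMod 2] List ℕ →₀ ZMod 2 :=
  (basisMonomials (Fin n) (ZMod 2)).constr (ZMod 2) fun e => normalForm (List.ofFn e)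

theorem normalFormMap_monomial (e : Fin n →₀ ℕ) :
    normalFormMap n (monomial e 1) = normalForm (List.ofFn e) := by
  rw [normalFormMap]
  simpa [coe_basisMonomials] using
    (basisMonomials (Fin n) (ZMod 2)).constr_basis (ZMod 2) (fun e => normalForm (List.ofFn e)) e

theorem normalFormMap_monomial_mul_gen (u : Fin n →₀ ℕ) (i : Fin n) :
    normalFormMap n (monomial u 1 * gen n i) = 0 := by
  have hsq : monomial u 1 * X i ^ 2 = monomial (u + Finsupp.single i 2) (1 : ZMod 2) := by
    simp [X_pow_eq_monomial, monomial_mul]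
  rw [gen]
  split_ifs with hi
  · rw [add_zero, hsq, normalFormMap_monomial, normalForm, if_neg]
    rw [ofFn_add_single, hi]
    exact reduce_modify_zero_add_two_fst_ne_zero (List.ne_nil_of_length_pos (by simp [i.pos]))
  · set j : Fin n := ⟨(i : ℕ) - 1, Nat.lt_of_le_of_lt (Nat.sub_le _ _) i.isLt⟩
    have hij : (i : ℕ) = j + 1 := by simp only [j]; omega
    have hmix : monomial u 1 * (X j * X i) =
        monomial (u + Finsupp.single j 1 + Finsupp.single i 1) (1 : ZMod 2) := by
      simp [X, monomial_mul, add_assoc]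
    rw [mul_add, hsq, hmix, map_add, normalFormMap_monomial, normalFormMap_monomial,
      ofFn_add_single, ofFn_add_single, ofFn_add_single, hij, normalForm, normalForm,
      reduce_modify_add_two (by simp [← hij]), ← two_smul (ZMod 2),
      show (2 : ZMod 2) = 0 from rfl, zero_smul]

noncomputable def normalFormQuotient (n : ℕ) :
    (MvPolynomial (Fin n) (ZMod 2) ⧸ Tideal n) →ₗ[ZMod 2] List ℕ →₀ ZMod 2 :=
  ((Tideal n).restrictScalars (ZMod 2)).liftQ (normalFormMap n) (fun _ hp => LinearMap.mem_ker.2 <|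
      linearMap_eq_zero_of_mem_span_range _ _ normalFormMap_monomial_mul_gen hp) ∘ₗ
    (Submodule.Quotient.restrictScalarsEquiv (ZMod 2) (Tideal n)).symm.toLinearMap

theorem normalFormQuotient_sqFreeClass (S : Finset (Fin n)) :
    normalFormQuotient n (sqFreeClass n S) =
      Finsupp.single (List.ofFn fun i => if i ∈ S then 1 else 0) 1 := by
  have hind : ⇑(Finsupp.indicator S fun _ _ => 1) = fun i => if i ∈ S then 1 else 0 := by
    ext i; simp [Finsupp.indicator_apply]
  have hprod : ∏ i ∈ S, X i = monomial (Finsupp.indicator S fun _ _ => 1) (1 : ZMod 2) := by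
    simpa using prod_X_pow (R := ZMod 2) (fun _ => 1) S
  rw [normalFormQuotient, LinearMap.comp_apply, sqFreeClass, ← Ideal.Quotient.mk_eq_mk,
    LinearEquiv.coe_coe, Submodule.Quotient.restrictScalarsEquiv_symm_mk, Submodule.liftQ_apply,
    hprod, normalFormMap_monomial, hind, normalForm,
    reduce_of_le_one (by simp only [List.mem_ofFn]; rintro _ ⟨i, rfl⟩; split_ifs <;> omega)]
  rfl

theorem linearIndependent_sqFreeClass (n : ℕ) :
    LinearIndependent (ZMod 2) (sqFreeClass n) := by
  have hinj :
      Function.Injective fun S : Finset (Fin n) => List.ofFn fun i => if i ∈ S then 1 else 0 := by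
    intro S T h
    ext i
    have := congrFun (List.ofFn_inj.1 h) i
    split_ifs at this <;> simp_all
  refine LinearIndependent.of_comp (normalFormQuotient n) ?_
  convert (Finsupp.linearIndependent_single_one (ZMod 2) (List ℕ)).comp _ hinj
  exact funext normalFormQuotient_sqFreeClass

end Tideal

theorem stmt9_general (n : ℕ) :
    ∃ B : Module.Basis (Finset (Fin n)) (ZMod 2) (MvPolynomial (Fin n) (ZMod 2) ⧸ Tideal n),
      ∀ S : Finset (Fin n), B S = Ideal.Quotient.mk (Tideal n) (∏ i ∈ S, X i) :=
  ⟨.mk (Tideal.linearIndependent_sqFreeClass n) (Tideal.span_range_sqFreeClass n).ge,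
    Module.Basis.mk_apply _ _⟩

/-- The images of the `2ⁿ` square-free monomials `∏_{i∈S} t_i` (over subsets
`S ⊆ {1,…,n}`) form a ℤ/2-basis of the quotient `(ℤ/2)[t₁,…,tₙ]/𝒯ₙ`. -/
theorem stmt9 (n : ℕ) (hn : 1 ≤ n) :
    ∃ B : Module.Basis (Finset (Fin n)) (ZMod 2) (MvPolynomial (Fin n) (ZMod 2) ⧸ Tideal n),
      ∀ S : Finset (Fin n), B S = Ideal.Quotient.mk (Tideal n) (∏ i ∈ S, X i) :=
  stmt9_general n
end

section
/- Suppose σ : ℕ × ℕ → ℤ/2 satisfies: σ(2,0) = 1 and σ(2,1) = 1; for every n ≥ 2, σ(n+1, k) = Σ_{i=0}^{k} σ(n, i) for all k with 0 ≤ k ≤ n−1; and σ(n+1, n) = σ(n+1, n−1) for every n ≥ 2. Then for every n ≥ 2 and every k with 0 ≤ k ≤ n−1, σ(n, k) equals the binomial coefficient C(n+k, k) reduced modulo 2. -/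
/-!
Induction on `n`. Below the top entry the recursion is the hockey-stick identity
`∑_{i ≤ k} C(n+i, i) = C(n+k+1, k)`. At the top entry `k = n` of row `n + 1` the extra condition
gives `C(2n, n-1)`, which agrees with `C(2n+1, n) = C(2n, n-1) + C(2n, n)` modulo 2 because the
central binomial coefficient `C(2n, n)` is even.
-/

open Finset

theorem Nat.sum_range_choose_add_self (m k : ℕ) :
    ∑ i ∈ range (k + 1), (m + i).choose i = (m + k + 1).choose k := by
  calc ∑ i ∈ range (k + 1), (m + i).choose i
      = ∑ i ∈ range (k + 1), (i + m).choose m := by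
        refine sum_congr rfl fun i _ => ?_
        rw [add_comm, Nat.choose_symm_add]
    _ = (m + k + 1).choose k := by
        rw [Nat.sum_range_add_choose, add_comm k m]
        exact Nat.choose_symm_of_eq_add (by ring)

theorem Nat.cast_choose_two_mul_add_one_zmod_two {m : ℕ} (hm : 0 < m) :
    ((2 * m + 1).choose m : ZMod 2) = (2 * m).choose (m - 1) := by
  obtain ⟨p, rfl⟩ : ∃ p, m = p + 1 := ⟨m - 1, by omega⟩
  have hcentral : ((2 * (p + 1)).choose (p + 1) : ZMod 2) = 0 := by
    rw [ZMod.natCast_eq_zero_iff, ← Nat.centralBinom_eq_two_mul_choose]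
    exact Nat.two_dvd_centralBinom_succ p
  rw [Nat.add_sub_cancel, Nat.choose_succ_succ, Nat.cast_add, hcentral, add_zero]

/-- Suppose `σ : ℕ × ℕ → ℤ/2` satisfies `σ(2,0) = σ(2,1) = 1`, the recursion
`σ(n+1,k) = ∑_{i=0}^{k} σ(n,i)` for all `n ≥ 2` and `0 ≤ k ≤ n−1`, and
`σ(n+1,n) = σ(n+1,n−1)` for all `n ≥ 2`. Then `σ(n,k) ≡ C(n+k,k) (mod 2)` for all
`n ≥ 2` and `0 ≤ k ≤ n−1`. -/
theorem stmt10 (σ : ℕ × ℕ → ZMod 2)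
    (h20 : σ (2, 0) = 1) (h21 : σ (2, 1) = 1)
    (hrec : ∀ n, 2 ≤ n → ∀ k, k ≤ n - 1 →
      σ (n + 1, k) = ∑ i ∈ Finset.range (k + 1), σ (n, i))
    (htop : ∀ n, 2 ≤ n → σ (n + 1, n) = σ (n + 1, n - 1)) :
    ∀ n, 2 ≤ n → ∀ k, k ≤ n - 1 → σ (n, k) = ((n + k).choose k : ZMod 2) := by
  intro n hn
  induction n, hn using Nat.le_induction with
  | base =>
    intro k hk
    interval_cases k
    · simpa using h20
    · rw [h21]; decide
  | succ m hm ih =>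
    have below : ∀ k, k ≤ m - 1 → σ (m + 1, k) = ((m + 1 + k).choose k : ZMod 2) := by
      intro k hk
      rw [hrec m hm k hk, sum_congr rfl fun i hi => ih i (by simp at hi; omega), ← Nat.cast_sum,
        Nat.sum_range_choose_add_self, add_right_comm]
    intro k hk
    obtain hlt | rfl : k < m ∨ k = m := by omega
    · exact below k (by omega)
    · rw [htop k hm, below (k - 1) le_rfl, show k + 1 + (k - 1) = 2 * k by omega,
        show k + 1 + k = 2 * k + 1 by ring, Nat.cast_choose_two_mul_add_one_zmod_two (by omega)]
end

section
/- Let r ≥ 1 and n = 2^r. Let W ∈ (ℤ/2)[t₁,…,tₙ] be the product W = ∏_{j=1}^{n−1} (1 + t_j + t_j² + ⋯ + t_j^{j}), and let W_{n−1} denote its homogeneous component of degree n−1. Then the image of W_{n−1} in the quotient ring (ℤ/2)[t₁,…,tₙ]/𝒯ₙ equals the image of the monomial t₁t₂⋯t_{n−1}, and this image is nonzero. -/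
/-!
In the quotient, `t₁² = 0` and `tᵢ² = tᵢ₋₁tᵢ`, so moving exponent mass to the left reduces every
monomial of degree `n - 1` in `t₁, …, tₙ₋₁` either to `0` or to `t₁⋯tₙ₋₁`. Which of the two it
becomes is decided by the ballot condition `α₁ + ⋯ + αₖ ≤ k` on its exponents: the functional
summing the coefficients of the ballot monomials of a fixed degree kills `𝒯ₙ`, because the two
monomials of each relation are ballot together or not at all, and it takes the value `1` on
`t₁⋯tₙ₋₁`, which is therefore not in `𝒯ₙ`. Hence `W_{n-1} ≡ N · t₁⋯tₙ₋₁`, where `N` is the number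
of ballot sequences of length and sum `n - 1` (a Catalan number). Modulo `2` the ballot numbers
are binomial coefficients, and for `n = 2^r` Lucas' theorem shows that `N` is odd.
-/

open MvPolynomial

open Finset

def IsBallot {m : ℕ} (y : Fin m → ℕ) : Prop :=
  ∀ k, ∑ j ∈ Iic k, y j ≤ k + 1

instance {m : ℕ} : DecidablePred (IsBallot (m := m)) :=
  fun _ => Fintype.decidableForallFintype

theorem isBallot_snoc {m : ℕ} (z : Fin m → ℕ) (e : ℕ) :
    IsBallot (Fin.snoc z e : Fin (m + 1) → ℕ) ↔ IsBallot z ∧ ∑ i, z i + e ≤ m + 1 := by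
  simp [IsBallot, Fin.forall_fin_succ', ← Fin.map_castSuccEmb_Iic, ← Fin.top_eq_last]

theorem isBallot_of_le_one {m : ℕ} {y : Fin m → ℕ} (hy : ∀ i, y i ≤ 1) : IsBallot y := fun k =>
  calc ∑ j ∈ Iic k, y j ≤ #(Iic k) • 1 := sum_le_card_nsmul _ _ _ fun j _ => hy j
    _ = k + 1 := by rw [Fin.card_Iic, smul_eq_mul, mul_one]

theorem IsBallot.sum_le {m : ℕ} {y : Fin m → ℕ} (hy : IsBallot y) : ∑ i, y i ≤ m := by
  cases m with
  | zero => simp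
  | succ m =>
    rw [← Fin.snoc_init_self y, isBallot_snoc] at hy
    rw [← Fin.snoc_init_self y, Fin.sum_snoc]
    exact hy.2

section Counting

theorem card_filter_piFinset_snoc {α : Type*} {m : ℕ} (S : Fin (m + 1) → Finset α)
    (P : (Fin (m + 1) → α) → Prop) [DecidablePred P] :
    #{r ∈ Fintype.piFinset S | P r} =
      ∑ e ∈ S (Fin.last m), #{z ∈ Fintype.piFinset (Fin.init S) | P (Fin.snoc z e)} := by
  have h := filter_piFinset_eq_map_snocEquiv S (fun _ => True)
  rw [filter_true, filter_true] at h
  rw [h, filter_map, card_map, card_filter, sum_product]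
  exact sum_congr rfl fun e _ => (card_filter _ _).symm

def ballotTuples (m s : ℕ) : Finset (Fin m → ℕ) :=
  {y ∈ Fintype.piFinset fun i : Fin m => range (i + 2) | ∑ i, y i = s ∧ IsBallot y}

theorem ballotTuples_eq_empty {m s : ℕ} (h : m < s) : ballotTuples m s = ∅ :=
  filter_false_of_mem fun _ _ ⟨hsum, hy⟩ => by have := hy.sum_le; omega

theorem card_ballotTuples_succ {m s : ℕ} (hs : s ≤ m + 1) :
    #(ballotTuples (m + 1) s) = ∑ t ∈ range (s + 1), #(ballotTuples m t) := by
  rw [ballotTuples, card_filter_piFinset_snoc,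
    ← sum_range_reflect (fun t => #(ballotTuples m t)), Nat.add_sub_cancel]
  simp only [Fin.sum_snoc, isBallot_snoc, Fin.val_last]
  rw [← sum_subset (range_subset_range.2 (by omega : s + 1 ≤ m + 1 + 1))]
  · refine sum_congr rfl fun e he => ?_
    rw [mem_range] at he
    rw [ballotTuples]
    congr 1
    exact filter_congr fun z _ =>
      ⟨fun ⟨h, hz, _⟩ => ⟨by omega, hz⟩, fun ⟨h, hz⟩ => ⟨by omega, hz, by omega⟩⟩
  · intro e _ he
    rw [mem_range] at he
    exact card_eq_zero.2 (filter_false_of_mem fun z _ ⟨h, _⟩ => by omega)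

/-- The ballot numbers are `(s+m choose s) - (s+m choose s-1)`; modulo `2` the difference becomes
the sum `s+m+1 choose s`. -/
theorem natCast_card_ballotTuples {m s : ℕ} (hs : s ≤ m + 1) :
    (#(ballotTuples m s) : ZMod 2) = (s + m + 1).choose (m + 1) := by
  induction m generalizing s with
  | zero =>
    interval_cases s
    · decide
    · rw [ballotTuples_eq_empty zero_lt_one]
      decide
  | succ m ih =>
    obtain hs | rfl := hs.lt_or_eq
    · rw [card_ballotTuples_succ (by omega), Nat.cast_sum,
        sum_congr rfl fun t ht => ih (by rw [mem_range] at ht; omega), ← Nat.cast_sum]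
      simpa only [add_assoc] using
        congrArg (Nat.cast (R := ZMod 2)) (Nat.sum_range_add_choose s (m + 1))
    · rw [ballotTuples_eq_empty (by omega), card_empty, Nat.cast_zero,
        show m + 1 + 1 + (m + 1) + 1 = 2 * (m + 1 + 1) by ring,
        ← Nat.centralBinom_eq_two_mul_choose, eq_comm, ZMod.natCast_eq_zero_iff]
      exact Nat.two_dvd_centralBinom_succ _

theorem natCast_choose_two_pow_sub_one {k j : ℕ} (hj : j < 2 ^ k) :
    ((2 ^ k - 1).choose j : ZMod 2) = 1 := by
  induction k generalizing j with
  | zero => simp_all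
  | succ k ih =>
    have := Fact.mk Nat.prime_two
    rw [(ZMod.natCast_eq_natCast_iff _ _ _).2 Choose.choose_modEq_choose_mod_mul_choose_div_nat,
      Nat.cast_mul, show (2 ^ (k + 1) - 1) / 2 = 2 ^ k - 1 by omega, ih (by omega),
      show (2 ^ (k + 1) - 1) % 2 = 1 by omega]
    have : j % 2 < 2 := Nat.mod_lt _ two_pos
    interval_cases j % 2 <;> rfl

theorem natCast_card_ballotTuples_two_pow_sub_one (r : ℕ) :
    (#(ballotTuples (2 ^ r - 1) (2 ^ r - 1)) : ZMod 2) = 1 := by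
  have := Nat.one_le_two_pow (n := r)
  rw [natCast_card_ballotTuples (by omega),
    show 2 ^ r - 1 + (2 ^ r - 1) + 1 = 2 ^ (r + 1) - 1 by rw [pow_succ]; omega]
  exact natCast_choose_two_pow_sub_one (by rw [pow_succ]; omega)

end Counting

section BallotFunctional

variable {n : ℕ}

/-- The index of `tᵢ₋₁` copied verbatim from `Tideal`, so that its generators unfold to this form. -/
def Fin.predOrZero (i : Fin n) : Fin n := ⟨i - 1, Nat.lt_of_le_of_lt (Nat.sub_le _ _) i.isLt⟩

theorem X_sq_add_mem_Tideal (i : Fin n) :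
    X i ^ 2 + (if (i : ℕ) = 0 then 0 else X i.predOrZero * X i) ∈ Tideal n :=
  Ideal.subset_span ⟨i, rfl⟩

theorem mk_X_sq_of_val_eq_zero {i : Fin n} (hi : (i : ℕ) = 0) :
    Ideal.Quotient.mk (Tideal n) (X i ^ 2) = 0 :=
  Ideal.Quotient.eq_zero_iff_mem.2 (by simpa [hi] using X_sq_add_mem_Tideal i)

theorem mk_X_sq_of_val_ne_zero {i : Fin n} (hi : (i : ℕ) ≠ 0) :
    Ideal.Quotient.mk (Tideal n) (X i ^ 2) =
      Ideal.Quotient.mk (Tideal n) (X i.predOrZero * X i) := by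
  rw [Ideal.Quotient.eq, CharTwo.sub_eq_add]
  simpa [hi] using X_sq_add_mem_Tideal i

theorem sum_Iic_add_single (α : Fin n →₀ ℕ) (i k : Fin n) (c : ℕ) :
    ∑ j ∈ Iic k, (α + Finsupp.single i c) j = ∑ j ∈ Iic k, α j + if i ≤ k then c else 0 := by
  simp [sum_add_distrib, Finsupp.single_apply]

theorem not_isBallot_add_single_two {i : Fin n} (hi : (i : ℕ) = 0) (α : Fin n →₀ ℕ) :
    ¬ IsBallot (α + Finsupp.single i 2 : Fin n →₀ ℕ) := fun h => by
  have := h i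
  rw [sum_Iic_add_single, if_pos le_rfl] at this
  omega

theorem isBallot_add_single_two_iff (i : Fin n) (α : Fin n →₀ ℕ) :
    IsBallot (α + Finsupp.single i 2 : Fin n →₀ ℕ) ↔
      IsBallot (α + Finsupp.single i.predOrZero 1 + Finsupp.single i 1 : Fin n →₀ ℕ) := by
  have hmono : ∑ j ∈ Iic i.predOrZero, α j ≤ ∑ j ∈ Iic i, α j :=
    sum_le_sum_of_subset (Iic_subset_Iic.2 (Fin.le_iff_val_le_val.2 (Nat.sub_le _ _)))
  have hval : (i.predOrZero : ℕ) = i - 1 := rfl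
  simp only [IsBallot, sum_Iic_add_single, Fin.le_iff_val_le_val, hval]
  constructor
  · intro h k
    obtain rfl | hk := eq_or_ne k i.predOrZero
    · have := h i
      split_ifs at * <;> omega
    · have := h k
      have : (k : ℕ) ≠ i - 1 := fun h' => hk (Fin.ext h')
      split_ifs at * <;> omega
  · intro h k
    have := h k
    split_ifs at * <;> omega

variable (n) in
noncomputable def ballotFunctional (d : ℕ) : MvPolynomial (Fin n) (ZMod 2) →ₗ[ZMod 2] ZMod 2 :=
  ∑ α ∈ (univ.finsuppAntidiag d).filter fun α : Fin n →₀ ℕ => IsBallot α, lcoeff (ZMod 2) α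

theorem ballotFunctional_monomial (d : ℕ) (α : Fin n →₀ ℕ) (c : ZMod 2) :
    ballotFunctional n d (monomial α c) = if α.degree = d ∧ IsBallot α then c else 0 := by
  simp [ballotFunctional, coeff_monomial, Finsupp.degree_eq_sum]

theorem ballotFunctional_monomial_mul_generator (d : ℕ) (α : Fin n →₀ ℕ) (c : ZMod 2)
    (i : Fin n) :
    ballotFunctional n d
      (monomial α c * (X i ^ 2 + if (i : ℕ) = 0 then 0 else X i.predOrZero * X i)) = 0 := by
  have hdeg : (α + Finsupp.single i.predOrZero 1 + Finsupp.single i 1).degree =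
      (α + Finsupp.single i 2).degree := by
    simp only [map_add, Finsupp.degree_single]
  split_ifs with hi
  · rw [add_zero, ← monomial_add_single, ballotFunctional_monomial,
      if_neg fun h => not_isBallot_add_single_two hi α h.2]
  · rw [mul_add, ← mul_assoc, ← monomial_add_single, ← pow_one (X i.predOrZero), ← pow_one (X i),
      ← monomial_add_single, ← monomial_add_single, map_add, ballotFunctional_monomial,
      ballotFunctional_monomial, hdeg]
    simp only [isBallot_add_single_two_iff, CharTwo.add_self_eq_zero]

theorem ballotFunctional_eq_zero_of_mem (d : ℕ) {p : MvPolynomial (Fin n) (ZMod 2)}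
    (hp : p ∈ Tideal n) : ballotFunctional n d p = 0 := by
  obtain ⟨c, rfl⟩ := Ideal.mem_span_range_iff_exists_fun.1 hp
  rw [map_sum]
  refine sum_eq_zero fun i _ => ?_
  rw [(c i).as_sum, sum_mul, map_sum]
  exact sum_eq_zero fun α _ => ballotFunctional_monomial_mul_generator d α _ i

theorem ballotFunctional_eq_of_mk_eq (d : ℕ) {p q : MvPolynomial (Fin n) (ZMod 2)}
    (h : Ideal.Quotient.mk (Tideal n) p = Ideal.Quotient.mk (Tideal n) q) :
    ballotFunctional n d p = ballotFunctional n d q :=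
  sub_eq_zero.1 (by rw [← map_sub]; exact ballotFunctional_eq_zero_of_mem d (Ideal.Quotient.eq.1 h))

end BallotFunctional

theorem monomial_one_eq_prod_X_pow {σ R : Type*} [Fintype σ] [CommSemiring R] (α : σ →₀ ℕ) :
    monomial α (1 : R) = ∏ i, X i ^ α i := by
  rw [monic_monomial_eq, Finsupp.prod_fintype _ _ fun _ => pow_zero _]

section Reduction

variable {m : ℕ}

theorem prod_X_castSucc_pow {R : Type*} [CommSemiring R] (z : Fin m → ℕ) :
    ∏ i : Fin m, (X i.castSucc : MvPolynomial (Fin (m + 1)) R) ^ z i =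
      monomial (Finsupp.equivFunOnFinite.symm (Fin.snoc z 0)) 1 := by
  rw [monomial_one_eq_prod_X_pow, Fin.prod_univ_castSucc]
  simp

theorem prod_X_castSucc {R : Type*} [CommSemiring R] :
    ∏ i : Fin m, (X i.castSucc : MvPolynomial (Fin (m + 1)) R) =
      monomial (Finsupp.equivFunOnFinite.symm (Fin.snoc (fun _ => 1) 0)) 1 := by
  simp_rw [← prod_X_castSucc_pow, pow_one]

theorem monomial_eq_prod_X_castSucc_of_le_one {R : Type*} [CommSemiring R]
    (α : Fin (m + 1) →₀ ℕ) (hlast : α (Fin.last m) = 0) (hdeg : α.degree = m)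
    (hα : ∀ j, α j ≤ 1) :
    monomial α (1 : R) = ∏ i : Fin m, X i.castSucc := by
  have hsum : ∑ i : Fin m, α i.castSucc = ∑ _i : Fin m, 1 := by
    rw [Finsupp.degree_eq_sum, Fin.sum_univ_castSucc, hlast, add_zero] at hdeg
    simp [hdeg]
  have hone (i : Fin m) : α i.castSucc = 1 :=
    (sum_eq_sum_iff_of_le fun i _ => hα _).1 hsum i (mem_univ i)
  rw [prod_X_castSucc]
  congr
  ext j
  induction j using Fin.lastCases <;> simp [hlast, hone]

theorem mk_monomial_add_single_two {j : Fin (m + 1)} (hj : (j : ℕ) ≠ 0) (β : Fin (m + 1) →₀ ℕ) :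
    Ideal.Quotient.mk (Tideal (m + 1)) (monomial (β + Finsupp.single j 2) 1) =
      Ideal.Quotient.mk (Tideal (m + 1))
        (monomial (β + Finsupp.single j.predOrZero 1 + Finsupp.single j 1) 1) := by
  rw [monomial_add_single, map_mul, mk_X_sq_of_val_ne_zero hj, ← map_mul,
    monomial_add_single, monomial_add_single, pow_one, pow_one, mul_assoc]

theorem mk_monomial_eq_zero_or_eq (α : Fin (m + 1) →₀ ℕ) (hlast : α (Fin.last m) = 0)
    (hdeg : α.degree = m) :
    Ideal.Quotient.mk (Tideal (m + 1)) (monomial α 1) = 0 ∨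
      Ideal.Quotient.mk (Tideal (m + 1)) (monomial α 1) =
        Ideal.Quotient.mk (Tideal (m + 1)) (∏ i : Fin m, X i.castSucc) := by
  -- rewriting `tⱼ²` as `tⱼ₋₁tⱼ` lowers the weight `∑ j αⱼ` by one
  induction hw : Finsupp.weight (fun j : Fin (m + 1) => (j : ℕ)) α
    using Nat.strong_induction_on generalizing α with
  | _ w ih =>
    by_cases hα : ∀ j, α j ≤ 1
    · exact Or.inr (by rw [monomial_eq_prod_X_castSucc_of_le_one α hlast hdeg hα])
    obtain ⟨j, hj⟩ := not_forall.1 hα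
    obtain ⟨β, rfl⟩ : ∃ β, α = β + Finsupp.single j 2 :=
      ⟨α - Finsupp.single j 2, (tsub_add_cancel_of_le (Finsupp.single_le_iff.2 (by omega))).symm⟩
    by_cases hj0 : (j : ℕ) = 0
    · left
      rw [monomial_add_single, map_mul, mk_X_sq_of_val_eq_zero hj0, mul_zero]
    have hjlast : j ≠ Fin.last m := by
      rintro rfl
      simp at hlast
    have hj'last : j.predOrZero ≠ Fin.last m := by
      simp only [ne_eq, Fin.ext_iff, Fin.predOrZero, Fin.val_last]
      omega
    rw [mk_monomial_add_single_two hj0]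
    refine ih _ ?_ _ ?_ (by simpa using hdeg) rfl
    · subst hw
      simp only [map_add, Finsupp.weight_single, smul_eq_mul, Fin.predOrZero]
      omega
    · simpa [Finsupp.single_apply, hjlast.symm, hj'last.symm] using hlast

theorem ballotFunctional_prod_X_castSucc :
    ballotFunctional (m + 1) m (∏ i : Fin m, X i.castSucc) = 1 := by
  rw [prod_X_castSucc, ballotFunctional_monomial]
  refine if_pos ⟨by simp [Finsupp.degree_eq_sum, Fin.sum_univ_castSucc], isBallot_of_le_one ?_⟩
  intro j
  induction j using Fin.lastCases <;> simp

theorem prod_X_castSucc_notMem_Tideal : ∏ i : Fin m, X i.castSucc ∉ Tideal (m + 1) := fun h => by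
  simpa [ballotFunctional_prod_X_castSucc] using ballotFunctional_eq_zero_of_mem m h

theorem mk_monomial_eq_ite (α : Fin (m + 1) →₀ ℕ) (hlast : α (Fin.last m) = 0)
    (hdeg : α.degree = m) :
    Ideal.Quotient.mk (Tideal (m + 1)) (monomial α 1) =
      if IsBallot α then Ideal.Quotient.mk (Tideal (m + 1)) (∏ i : Fin m, X i.castSucc) else 0 := by
  have hval := ballotFunctional_monomial m α 1
  simp only [hdeg, true_and] at hval
  rcases mk_monomial_eq_zero_or_eq α hlast hdeg with h | h
  · have := ballotFunctional_eq_of_mk_eq m (h.trans (map_zero _).symm)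
    rw [map_zero, hval] at this
    rw [h, if_neg fun hb => by simp [hb] at this]
  · have := ballotFunctional_eq_of_mk_eq m h
    rw [ballotFunctional_prod_X_castSucc, hval] at this
    rw [h, if_pos (by by_contra hb; simp [hb] at this)]

end Reduction

section Expansion

variable {m : ℕ}

theorem mk_homogeneousComponent_monomial_snoc (z : Fin m → ℕ) :
    Ideal.Quotient.mk (Tideal (m + 1))
        (homogeneousComponent m (monomial (Finsupp.equivFunOnFinite.symm (Fin.snoc z 0)) 1)) =
      if ∑ i, z i = m ∧ IsBallot z then
        Ideal.Quotient.mk (Tideal (m + 1)) (∏ i : Fin m, X i.castSucc) else 0 := by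
  have hdeg :
      (Finsupp.equivFunOnFinite.symm (Fin.snoc z 0) : Fin (m + 1) →₀ ℕ).degree = ∑ i, z i := by
    simp [Finsupp.degree_eq_sum, Fin.sum_univ_castSucc]
  rw [homogeneousComponent_of_mem (isHomogeneous_monomial _ hdeg)]
  by_cases hz : ∑ i, z i = m
  · rw [if_pos hz.symm, mk_monomial_eq_ite _ (by simp) (hdeg.trans hz)]
    simp [isBallot_snoc, hz]
  · rw [if_neg (Ne.symm hz), if_neg fun h => hz h.1, map_zero]

theorem mk_homogeneousComponent_prod_eq_card_smul :
    Ideal.Quotient.mk (Tideal (m + 1))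
        (homogeneousComponent m (∏ i : Fin m, ∑ e ∈ range (i + 2), X i.castSucc ^ e)) =
      #(ballotTuples m m) • Ideal.Quotient.mk (Tideal (m + 1)) (∏ i : Fin m, X i.castSucc) := by
  simp_rw [prod_univ_sum, prod_X_castSucc_pow, map_sum, mk_homogeneousComponent_monomial_snoc,
    ← sum_filter, sum_const]
  rfl

end Expansion

theorem prod_filter_val_lt_eq_prod_castSucc {M : Type*} [CommMonoid M] {m : ℕ}
    (f : Fin (m + 1) → M) :
    ∏ i ∈ univ.filter (fun i : Fin (m + 1) => (i : ℕ) < m), f i = ∏ i : Fin m, f i.castSucc := by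
  rw [prod_filter, Fin.prod_univ_castSucc]
  simp

theorem stmt12_general (n r : ℕ) (hn : n = 2 ^ r) :
    Ideal.Quotient.mk (Tideal n)
        (homogeneousComponent (n - 1)
          (∏ i ∈ Finset.univ.filter (fun i : Fin n => (i : ℕ) < n - 1),
            ∑ e ∈ Finset.range ((i : ℕ) + 2), X i ^ e)) =
      Ideal.Quotient.mk (Tideal n)
        (∏ i ∈ Finset.univ.filter (fun i : Fin n => (i : ℕ) < n - 1), X i) ∧
    Ideal.Quotient.mk (Tideal n)
        (∏ i ∈ Finset.univ.filter (fun i : Fin n => (i : ℕ) < n - 1), X i) ≠ 0 := by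
  obtain ⟨m, rfl, hm⟩ : ∃ m, n = m + 1 ∧ m = 2 ^ r - 1 :=
    ⟨2 ^ r - 1, by have := Nat.one_le_two_pow (n := r); omega, rfl⟩
  simp only [Nat.add_sub_cancel, prod_filter_val_lt_eq_prod_castSucc, Fin.val_castSucc]
  refine ⟨?_, fun h => prod_X_castSucc_notMem_Tideal (Ideal.Quotient.eq_zero_iff_mem.1 h)⟩
  rw [mk_homogeneousComponent_prod_eq_card_smul, ← Nat.cast_smul_eq_nsmul (ZMod 2), hm,
    natCast_card_ballotTuples_two_pow_sub_one, one_smul]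

/-- Let `n = 2^r` with `r ≥ 1`, and let `W = ∏_{j=1}^{n−1} (1 + t_j + ⋯ + t_j^j)`
(zero-based: `t_j ↔ X i` with `i < n−1`, and the `j`-th factor is `∑_{e<i+2} (X i)^e`).
Then in `(ℤ/2)[t₁,…,tₙ]/𝒯ₙ` the image of the degree-`(n−1)` homogeneous component of `W`
equals the image of `t₁t₂⋯t_{n−1}`, and this image is nonzero. -/
theorem stmt12 (n r : ℕ) (hr : 1 ≤ r) (hn : n = 2 ^ r) :
    Ideal.Quotient.mk (Tideal n)
        (homogeneousComponent (n - 1)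
          (∏ i ∈ Finset.univ.filter (fun i : Fin n => (i : ℕ) < n - 1),
            ∑ e ∈ Finset.range ((i : ℕ) + 2), X i ^ e)) =
      Ideal.Quotient.mk (Tideal n)
        (∏ i ∈ Finset.univ.filter (fun i : Fin n => (i : ℕ) < n - 1), X i) ∧
    Ideal.Quotient.mk (Tideal n)
        (∏ i ∈ Finset.univ.filter (fun i : Fin n => (i : ℕ) < n - 1), X i) ≠ 0 :=
  stmt12_general n r hn
end

section
/- Let n ≥ 1. Let W ∈ (ℤ/2)[t₁,…,tₙ] be the product W = ∏_{j=1}^{n−1} (1 + t_j + t_j² + ⋯ + t_j^{j}), and let W_n denote its homogeneous component of degree n. Then W_n lies in the ideal 𝒯ₙ; equivalently, the image of W_n in (ℤ/2)[t₁,…,tₙ]/𝒯ₙ is zero. -/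
/-!
Modulo `𝒯ₙ` one has `t₁² ≡ 0` and `t_{j+1}² ≡ t_j t_{j+1}`. A monomial in `t₁, …, t_k` of degree
`> k` repeats some variable; rewriting its square with these relations preserves the degree and
the set of allowed variables while strictly lowering the weight `∑ j · d_j` of the exponent
vector `d`, so the process ends at a multiple of `t₁²`. Every factor of `W` involves only
`t₁, …, t_{n-1}`, so each monomial of `W_n` is of this kind with `k = n - 1`.
-/

open MvPolynomial

theorem Finsupp.exists_two_le_of_card_support_lt_degree {σ : Type*} {d : σ →₀ ℕ}
    (h : d.support.card < d.degree) : ∃ i, 2 ≤ d i := by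
  by_contra! hlt
  refine h.not_ge ?_
  calc d.degree = ∑ i ∈ d.support, d i := Finsupp.degree_apply d
    _ ≤ ∑ _i ∈ d.support, 1 := Finset.sum_le_sum fun i _ => Nat.le_of_lt_succ (hlt i)
    _ = d.support.card := by simp

theorem Fin.card_le_of_forall_val_lt {n k : ℕ} {s : Finset (Fin n)} (h : ∀ j ∈ s, (j : ℕ) < k) :
    s.card ≤ k := by
  simpa using Finset.card_le_card_of_injOn (fun j : Fin n => (j : ℕ))
    (fun j hj => Finset.mem_range.2 (h j hj)) Fin.val_injective.injOn

namespace Tideal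

variable {n : ℕ}

theorem X_sq_mem (h : 0 < n) : (X ⟨0, h⟩ ^ 2 : MvPolynomial (Fin n) (ZMod 2)) ∈ Tideal n :=
  Ideal.subset_span ⟨⟨0, h⟩, by simp⟩

theorem X_sq_add_X_mul_X_mem (j : ℕ) (h : j + 1 < n) :
    (X ⟨j + 1, h⟩ ^ 2 + X ⟨j, by omega⟩ * X ⟨j + 1, h⟩ : MvPolynomial (Fin n) (ZMod 2)) ∈
      Tideal n :=
  Ideal.subset_span ⟨⟨j + 1, h⟩, by simp⟩

noncomputable abbrev indexWeight : (Fin n →₀ ℕ) →+ ℕ := Finsupp.weight fun j : Fin n => (j : ℕ)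

theorem monomial_mem_of_lt_degree {k : ℕ} (d : Fin n →₀ ℕ) (hsupp : ∀ j ∈ d.support, (j : ℕ) < k)
    (hk : k < d.degree) : monomial d (1 : ZMod 2) ∈ Tideal n := by
  induction hw : indexWeight d using Nat.strong_induction_on generalizing d with
  | _ w ih =>
  obtain ⟨i, hi⟩ := Finsupp.exists_two_le_of_card_support_lt_degree
    ((Fin.card_le_of_forall_val_lt hsupp).trans_lt hk)
  set e := d - Finsupp.single i 2
  have hd : d = Finsupp.single i 2 + e :=
    (add_tsub_cancel_of_le (Finsupp.single_le_iff.2 hi)).symm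
  have hmonomial : monomial d (1 : ZMod 2) = X i ^ 2 * monomial e 1 := by
    rw [X_pow_eq_monomial, monomial_mul, one_mul, ← hd]
  obtain ⟨_ | j, hin⟩ := i
  · rw [hmonomial]
    exact Ideal.mul_mem_right _ _ (X_sq_mem hin)
  · -- Trading `t_{j+1}²` for `t_j t_{j+1}` keeps the degree and lowers the weight by one.
    set d' := Finsupp.single (⟨j, by omega⟩ : Fin n) 1 + Finsupp.single ⟨j + 1, hin⟩ 1 + e
    have hreduce : monomial d (1 : ZMod 2) =
        (X ⟨j + 1, hin⟩ ^ 2 + X ⟨j, by omega⟩ * X ⟨j + 1, hin⟩) * monomial e 1 -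
          monomial d' 1 := by
      rw [add_mul, ← hmonomial]
      simp [X, monomial_mul, d']
    have hjk : j + 1 < k := hsupp ⟨j + 1, hin⟩ (Finsupp.mem_support_iff.2 (by omega))
    have hsupp' : ∀ l ∈ d'.support, (l : ℕ) < k := by
      intro l hl
      by_contra! hkl
      have hdl : d l = 0 := Finsupp.notMem_support_iff.1 fun h => (hsupp l h).not_ge hkl
      have hlj : l ≠ ⟨j, by omega⟩ := Fin.ne_of_val_ne (by dsimp only; omega)
      have hlj' : l ≠ ⟨j + 1, hin⟩ := Fin.ne_of_val_ne (by dsimp only; omega)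
      simp [d', e, hdl, hlj.symm, hlj'.symm] at hl
    have hdeg : d'.degree = d.degree := by
      rw [hd]
      simp [d', Finsupp.degree_single]
    have hweight : indexWeight d' < w := by
      rw [← hw, hd]
      simp only [map_add, Finsupp.weight_single, smul_eq_mul, one_mul, add_lt_add_iff_right, d']
      omega
    rw [hreduce]
    exact sub_mem (Ideal.mul_mem_right _ _ (X_sq_add_X_mul_X_mem j hin))
      (ih _ hweight d' hsupp' (hdeg ▸ hk) rfl)

theorem homogeneousComponent_mem_of_mem_supported {k m : ℕ} {p : MvPolynomial (Fin n) (ZMod 2)}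
    (hp : p ∈ supported (ZMod 2) {j : Fin n | (j : ℕ) < k}) (hkm : k < m) :
    homogeneousComponent m p ∈ Tideal n := by
  rw [homogeneousComponent_apply]
  refine Ideal.sum_mem _ fun d hd => ?_
  rw [Finset.mem_filter] at hd
  rw [← mul_one (coeff d p), ← C_mul_monomial]
  refine Ideal.mul_mem_left _ _ (monomial_mem_of_lt_degree d (fun j hj => ?_) (hd.2 ▸ hkm))
  exact mem_supported.1 hp ((mem_vars_iff_mem_support j).2 ⟨d, hd.1, hj⟩)

end Tideal

/-- Let `W = ∏_{j=1}^{n−1} (1 + t_j + ⋯ + t_j^j)` (zero-based: `t_j ↔ X i` with `i < n−1`,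
the `j`-th factor being `∑_{e<i+2} (X i)^e`). Then the degree-`n` homogeneous component of
`W` lies in `𝒯ₙ`, i.e. its image in `(ℤ/2)[t₁,…,tₙ]/𝒯ₙ` is zero. -/
theorem stmt13 (n : ℕ) (hn : 1 ≤ n) :
    homogeneousComponent n
        (∏ i ∈ Finset.univ.filter (fun i : Fin n => (i : ℕ) < n - 1),
          ∑ e ∈ Finset.range ((i : ℕ) + 2), X i ^ e) ∈ Tideal n := by
  refine Tideal.homogeneousComponent_mem_of_mem_supported (k := n - 1) ?_ (by omega)
  refine Subalgebra.prod_mem _ fun i hi => Subalgebra.sum_mem _ fun e _ => Subalgebra.pow_mem _ ?_ _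
  exact X_mem_supported.2 (Finset.mem_filter.1 hi).2
end
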